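/- Let α ∈ (0,1) and suppose u : B_1^n → ℝ is continuous with u(0) = 0, and satisfies the non-degeneracy sup_{B_r^n} u ≥ C r^α for all r ∈ (0,1/2) together with the Hölder bound |u(x) - u(z)| ≤ K|x - z|^α. Then there exists δ > 0 depending only on C, K, α such that for every r ∈ (0,1/2) there is a point y ∈ B_r^n with B_{δr}^n(y) ⊂ {u > 0}; consequently L^n({u > 0} ∩ B_{2r}^n) ≥ c r^n for c = c(n, C, K, α) > 0. -/

import Mathlib

/-!
At a point `y` where the non-degeneracy gives `u y ≥ C r^α`, the Hölder bound keeps `u` positive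
on the ball of radius `δ r` around `y` as soon as `K δ^α < C`; for `δ = min 1 (C / (2K))^(1/α)`
this ball also lies in `B_{2r}`, so the positivity set fills at least the volume `(δ r)^n |B_1|`
of `B_{2r}`.
-/

open MeasureTheory Metric Set Module

theorem ball_subset_setOf_pos_of_holder {X : Type*} [PseudoMetricSpace X] {u : X → ℝ}
    {K α ρ : ℝ} {y : X} (hK : 0 ≤ K) (hα : 0 ≤ α)
    (hu : ∀ x z, |u x - u z| ≤ K * dist x z ^ α) (hy : K * ρ ^ α < u y) :
    ball y ρ ⊆ {x | 0 < u x} := by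
  intro x hx
  have hxy : K * dist x y ^ α ≤ K * ρ ^ α := by
    gcongr
    exact (mem_ball.mp hx).le
  have hdrop : u y - u x ≤ K * dist x y ^ α :=
    (le_abs_self _).trans (abs_sub_comm (u x) (u y) ▸ hu x y)
  show 0 < u x
  linarith

theorem exists_pos_le_one_mul_rpow_lt {α C K : ℝ} (hα : 0 < α) (hC : 0 < C) (hK : 0 < K) :
    ∃ δ > 0, δ ≤ 1 ∧ K * δ ^ α < C := by
  have hCK : 0 < C / (2 * K) := by positivity
  refine ⟨min 1 ((C / (2 * K)) ^ α⁻¹), lt_min one_pos (by positivity), min_le_left _ _, ?_⟩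
  calc K * min 1 ((C / (2 * K)) ^ α⁻¹) ^ α
      ≤ K * ((C / (2 * K)) ^ α⁻¹) ^ α := by gcongr; exact min_le_right _ _
    _ = C / 2 := by rw [Real.rpow_inv_rpow hCK.le hα.ne']; field_simp
    _ < C := half_lt_self hC

theorem measureReal_ball_mul_pow_finrank_le {E : Type*} [NormedAddCommGroup E]
    [NormedSpace ℝ E] [MeasurableSpace E] [BorelSpace E] [FiniteDimensional ℝ E]
    (μ : Measure E) [μ.IsAddHaarMeasure] {s : Set E} (hs : Bornology.IsBounded s)
    {y : E} {ρ : ℝ} (hρ : 0 < ρ) (hsub : ball y ρ ⊆ s) :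
    μ.real (ball 0 1) * ρ ^ finrank ℝ E ≤ μ.real s := by
  have hball : μ.real (ball y ρ) = ρ ^ finrank ℝ E * μ.real (ball 0 1) := by
    simp only [measureReal_def, μ.addHaar_ball_of_pos y hρ, ENNReal.toReal_mul,
      ENNReal.toReal_ofReal (by positivity : (0 : ℝ) ≤ ρ ^ finrank ℝ E)]
  calc μ.real (ball 0 1) * ρ ^ finrank ℝ E = μ.real (ball y ρ) := by rw [hball, mul_comm]
    _ ≤ μ.real s := measureReal_mono hsub hs.measure_lt_top.ne

theorem positive_density_of_positivity_set_general
    (n : ℕ) (α C K : ℝ) (hα : α ∈ Set.Ioo (0 : ℝ) 1) (hC : 0 < C) (hK : 0 < K)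
    (u : EuclideanSpace ℝ (Fin n) → ℝ)
    (hnd : ∀ r ∈ Set.Ioo (0 : ℝ) (1 / 2),
      ∃ y ∈ Metric.closedBall (0 : EuclideanSpace ℝ (Fin n)) r, C * r ^ α ≤ u y)
    (hHolder : ∀ x z : EuclideanSpace ℝ (Fin n), |u x - u z| ≤ K * ‖x - z‖ ^ α) :
    ∃ δ > (0 : ℝ), ∃ c > (0 : ℝ), ∀ r ∈ Set.Ioo (0 : ℝ) (1 / 2),
      (∃ y ∈ Metric.closedBall (0 : EuclideanSpace ℝ (Fin n)) r,
        Metric.ball y (δ * r) ⊆ {x | 0 < u x}) ∧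
      c * r ^ (n : ℝ) ≤
        (MeasureTheory.volume
          ({x | 0 < u x} ∩ Metric.closedBall (0 : EuclideanSpace ℝ (Fin n)) (2 * r))).toReal := by
  obtain ⟨δ, hδ0, hδ1, hKδ⟩ := exists_pos_le_one_mul_rpow_lt hα.1 hC hK
  have hunit : 0 < volume.real (ball (0 : EuclideanSpace ℝ (Fin n)) 1) :=
    ENNReal.toReal_pos (measure_ball_pos volume _ one_pos).ne' measure_ball_lt_top.ne
  refine ⟨δ, hδ0, volume.real (ball (0 : EuclideanSpace ℝ (Fin n)) 1) * δ ^ n,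
    by positivity, fun r hr ↦ ?_⟩
  obtain ⟨y, hy, hyu⟩ := hnd r hr
  have hpos : ball y (δ * r) ⊆ {x | 0 < u x} := by
    refine ball_subset_setOf_pos_of_holder hK.le hα.1.le (by simpa only [dist_eq_norm]) ?_
    calc K * (δ * r) ^ α = K * δ ^ α * r ^ α := by rw [Real.mul_rpow hδ0.le hr.1.le, mul_assoc]
      _ < C * r ^ α := by gcongr; exact Real.rpow_pos_of_pos hr.1 α
      _ ≤ u y := hyu
  have hin : ball y (δ * r) ⊆ closedBall 0 (2 * r) :=
    ball_subset_closedBall.trans <| closedBall_subset_closedBall' <| by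
      nlinarith [mem_closedBall.mp hy, hr.1]
  refine ⟨⟨y, hy, hpos⟩, ?_⟩
  calc _ = volume.real (ball (0 : EuclideanSpace ℝ (Fin n)) 1) *
        (δ * r) ^ finrank ℝ (EuclideanSpace ℝ (Fin n)) := by
        rw [finrank_euclideanSpace_fin, Real.rpow_natCast, mul_pow, mul_assoc]
    _ ≤ _ := measureReal_ball_mul_pow_finrank_le volume
        (isBounded_closedBall.subset inter_subset_right) (mul_pos hδ0 hr.1)
        (subset_inter hpos hin)

theorem positive_density_of_positivity_set
    (n : ℕ) (α C K : ℝ) (hα : α ∈ Set.Ioo (0 : ℝ) 1) (hC : 0 < C) (hK : 0 < K)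
    (u : EuclideanSpace ℝ (Fin n) → ℝ) (hu : Continuous u) (hu0 : u 0 = 0)
    (hnd : ∀ r ∈ Set.Ioo (0 : ℝ) (1 / 2),
      ∃ y ∈ Metric.closedBall (0 : EuclideanSpace ℝ (Fin n)) r, C * r ^ α ≤ u y)
    (hHolder : ∀ x z : EuclideanSpace ℝ (Fin n), |u x - u z| ≤ K * ‖x - z‖ ^ α) :
    ∃ δ > (0 : ℝ), ∃ c > (0 : ℝ), ∀ r ∈ Set.Ioo (0 : ℝ) (1 / 2),
      (∃ y ∈ Metric.closedBall (0 : EuclideanSpace ℝ (Fin n)) r,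
        Metric.ball y (δ * r) ⊆ {x | 0 < u x}) ∧
      c * r ^ (n : ℝ) ≤
        (MeasureTheory.volume
          ({x | 0 < u x} ∩ Metric.closedBall (0 : EuclideanSpace ℝ (Fin n)) (2 * r))).toReal :=
  positive_density_of_positivity_set_general n α C K hα hC hK u hnd hHolder
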